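/- arXiv:1906.12107 — 3 statements merged into one kernel-verified Lean document; each statement's English description precedes it below -/
import Mathlib

section
/- Assume 3b ∈ Δ and φ(3b) = 0. Then for every 2-cocycle α_λ(·,·) on CL(b,φ) there exist an additive group homomorphism g : Δ → ℂ with g(3b) = 0 and a function Φ : Δ → ℂ such that for all α, β ∈ Δ: α_λ(x_α, x_β) = (λ(α+β+2b) + B(α,β)) Φ(α+β) + δ_{α+β,−3b} g(α), where δ_{α+β,−3b} equals 1 if α+β = −3b and 0 otherwise. -/
/-!
Putting `x₀` in the third, resp. middle, slot of the cocycle identity gives two relations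
between `F α β`, `F (α + β) 0` and `F α γ`, `F (α + γ) 0`. Comparing top coefficients in `μ`,
the first shows `deg F α β = deg F (α + β) 0`; the second shows that a degree `n ≥ 2` forces
`α + γ + 3b = n b`, and, if `n ≥ 3`, `2(α + b) = (n - 1) b`. So `n = 2` would put `-b` in `Δ`,
and `n ≥ 3` determines `α` by `n`, although `deg F (α + t) (γ - t) = deg F (α + γ) 0 = n` for
every `t`. Hence every `F α β` is linear in `λ`, with the linear coefficients of the coboundary
of `Φ γ = (F γ 0)'(0) / (γ + 2b)`. What remains is a cocycle that is constant in `λ` and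
supported on `α + β = -3b`, and the cocycle identity says that its value at `(α, -3b - α)` is
additive in `α`.
-/

/-- `B(α,β) = (1/b)(φ(α)β − φ(β)α + b(φ(α) − φ(β)))`. -/
noncomputable def Bc (b : ℂ) {Δ : AddSubgroup ℂ} (φ : Δ →+ ℂ) (α β : Δ) : ℂ :=
  (1 / b) * (φ α * (β : ℂ) - φ β * (α : ℂ) + b * (φ α - φ β))

/-- A 2-cocycle on the Lie conformal algebra `CL(b,φ)`, recorded through its values
`F α β = α_λ(x_α, x_β) ∈ ℂ[λ]` on the free `ℂ[∂]`-generators.  (By conformal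
sesquilinearity `α_λ(∂a,b) = −λα_λ(a,b) = −α_λ(a,∂b)`, a 2-cocycle is determined by
these values, skew-symmetry becomes `α_λ(x_α,x_β) = −α_{−λ}(x_β,x_α)`, and the cocycle
identity `α_λ(a,[b_μ c]) − α_μ(b,[a_λ c]) = α_{λ+μ}([a_λ b],c)` evaluated on generators,
using `[x_α λ x_β] = ((α+b)∂ + (α+β+2b)λ + B(α,β))x_{α+β}`, becomes the displayed
polynomial identity, stated here by evaluation at all complex points `l, m`.) -/
def IsCocycle (Δ : AddSubgroup ℂ) (b : ℂ) (φ : Δ →+ ℂ)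
    (F : Δ → Δ → Polynomial ℂ) : Prop :=
  (∀ α β : Δ, ∀ l : ℂ, (F α β).eval l = -((F β α).eval (-l))) ∧
  (∀ α β γ : Δ, ∀ l m : ℂ,
    (((β : ℂ) + b) * l + ((β : ℂ) + (γ : ℂ) + 2 * b) * m + Bc b φ β γ)
        * (F α (β + γ)).eval l
      - (((α : ℂ) + b) * m + ((α : ℂ) + (γ : ℂ) + 2 * b) * l + Bc b φ α γ)
        * (F β (α + γ)).eval m
    = (-(((α : ℂ) + b)) * (l + m) + ((α : ℂ) + (β : ℂ) + 2 * b) * l + Bc b φ α β)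
        * (F (α + β) γ).eval (l + m))

open Polynomial

lemma coeff_linear_mul_succ {R : Type*} [Semiring R] (a c : R) (p : R[X]) (i : ℕ) :
    ((C a * X + C c) * p).coeff (i + 1) = a * p.coeff i + c * p.coeff (i + 1) := by
  rw [add_mul, coeff_add, mul_assoc, coeff_C_mul, coeff_X_mul, coeff_C_mul]

section PolynomialRelations

variable {K : Type*} [Field K] [CharZero K]

lemma coeff_eq_zero_of_forall_eval_eq_linear {p : K[X]} {a c : K}
    (h : ∀ x, p.eval x = a * x + c) {i : ℕ} (hi : 2 ≤ i) : p.coeff i = 0 := by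
  obtain ⟨j, rfl⟩ : ∃ j, i = j + 2 := ⟨i - 2, by omega⟩
  rw [show p = C a * X + C c from Polynomial.funext fun x => by simp [h]]
  simp

lemma natDegree_eq_of_forall_eval_neg {a₀ a₁ s t v : K} {f k : K[X]} (hv : v ≠ 0)
    (h : ∀ m, a₁ * m + a₀ + (v * m + s) * f.eval (-m) = (-v * m + t) * k.eval m) :
    f.natDegree = k.natDegree := by
  have hpoly : C a₁ * X + C a₀ + (C v * X + C s) * f.comp (C (-1) * X)
      = (C (-v) * X + C t) * k :=
    Polynomial.funext fun m => by simpa using h m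
  have hcoeff : ∀ j, v * (f.coeff (j + 1) * (-1) ^ (j + 1)) + s * (f.coeff (j + 2) * (-1) ^ (j + 2))
      = -v * k.coeff (j + 1) + t * k.coeff (j + 2) := fun j => by
    have := congrArg (coeff · (j + 2)) hpoly
    simp only [coeff_add, coeff_C_mul_X, coeff_C, coeff_linear_mul_succ, comp_C_mul_X_coeff] at this
    simpa using this
  apply le_antisymm
  · obtain hf | ⟨j, hj⟩ : f.natDegree = 0 ∨ ∃ j, f.natDegree = j + 1 :=
      (Nat.eq_zero_or_eq_succ_pred _).imp_right (⟨_, ·⟩)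
    · simp [hf]
    by_contra! hlt
    have hlead := coeff_ne_zero_of_eq_degree ((degree_eq_iff_natDegree_eq_of_pos j.succ_pos).mpr hj)
    have := hcoeff j
    rw [coeff_eq_zero_of_natDegree_lt (by omega : f.natDegree < j + 2),
      coeff_eq_zero_of_natDegree_lt (by omega : k.natDegree < j + 1),
      coeff_eq_zero_of_natDegree_lt (by omega : k.natDegree < j + 2)] at this
    simp_all
  · obtain hk | ⟨j, hj⟩ : k.natDegree = 0 ∨ ∃ j, k.natDegree = j + 1 :=
      (Nat.eq_zero_or_eq_succ_pred _).imp_right (⟨_, ·⟩)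
    · simp [hk]
    by_contra! hlt
    have hlead := coeff_ne_zero_of_eq_degree ((degree_eq_iff_natDegree_eq_of_pos j.succ_pos).mpr hj)
    have := hcoeff j
    rw [coeff_eq_zero_of_natDegree_lt (by omega : k.natDegree < j + 2),
      coeff_eq_zero_of_natDegree_lt (by omega : f.natDegree < j + 1),
      coeff_eq_zero_of_natDegree_lt (by omega : f.natDegree < j + 2)] at this
    simp_all

variable {b w v u d₁ d₂ d₃ : K} {f k : K[X]}

/-- By Taylor expansion of `f (l + m)`, the coefficient of `m ^ (j + 1)` in `h` is affine in `l`. -/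
lemma coeff_hasseDeriv_combination_eq_zero
    (h : ∀ l m, (b * l + w * m + d₁) * f.eval l + (v * m + u * l + d₂) * k.eval (-m)
      = (b * l - v * m + d₃) * f.eval (l + m)) (j : ℕ) {i : ℕ} (hi : 2 ≤ i) :
    ((C b * X + C d₃) * hasseDeriv (j + 1) f - C v * hasseDeriv j f
      - C ((C w).coeff j) * f).coeff i = 0 := by
  refine coeff_eq_zero_of_forall_eval_eq_linear (a := u * (k.coeff (j + 1) * (-1) ^ (j + 1)))
    (c := v * (k.coeff j * (-1) ^ j) + d₂ * (k.coeff (j + 1) * (-1) ^ (j + 1))) (fun l => ?_) hi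
  have hpoly : C (f.eval l) * (C w * X) + C ((b * l + d₁) * f.eval l)
        + (C v * X + C (u * l + d₂)) * k.comp (C (-1) * X)
      = (C (-v) * X + C (b * l + d₃)) * taylor l f :=
    Polynomial.funext fun m => by
      simp only [eval_add, eval_mul, eval_C, eval_X, eval_comp, taylor_eval, neg_one_mul,
        add_comm m l]
      linear_combination h l m
  have := congrArg (coeff · (j + 1)) hpoly
  simp only [coeff_add, coeff_C_mul, coeff_mul_X, coeff_C_succ, coeff_linear_mul_succ,
    comp_C_mul_X_coeff, taylor_coeff] at this
  simp only [eval_sub, eval_mul, eval_add, eval_C, eval_X]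
  linear_combination -this

lemma add_eq_mul_natDegree_of_forall_eval_add
    (h : ∀ l m, (b * l + w * m + d₁) * f.eval l + (v * m + u * l + d₂) * k.eval (-m)
      = (b * l - v * m + d₃) * f.eval (l + m)) (hf : 2 ≤ f.natDegree) :
    w + v = b * f.natDegree := by
  obtain ⟨j, hj⟩ : ∃ j, f.natDegree = j + 1 := ⟨_, (Nat.succ_pred_eq_of_pos (by omega)).symm⟩
  have := coeff_hasseDeriv_combination_eq_zero h 0 (i := j + 1) (by omega)
  simp only [coeff_sub, coeff_linear_mul_succ, hasseDeriv_coeff, coeff_C_mul, coeff_C_zero,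
    hasseDeriv_zero', zero_add, Nat.choose_one_right] at this
  rw [coeff_eq_zero_of_natDegree_lt (by omega : f.natDegree < j + 1 + 1)] at this
  have hlead := coeff_ne_zero_of_eq_degree ((degree_eq_iff_natDegree_eq_of_pos j.succ_pos).mpr hj)
  apply mul_right_cancel₀ hlead
  rw [hj]; push_cast at this ⊢
  linear_combination -this

lemma two_mul_eq_mul_natDegree_sub_one_of_forall_eval_add
    (h : ∀ l m, (b * l + w * m + d₁) * f.eval l + (v * m + u * l + d₂) * k.eval (-m)
      = (b * l - v * m + d₃) * f.eval (l + m)) (hf : 3 ≤ f.natDegree) :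
    2 * v = b * (f.natDegree - 1) := by
  obtain ⟨j, hj⟩ : ∃ j, f.natDegree = j + 2 := ⟨f.natDegree - 2, by omega⟩
  have := coeff_hasseDeriv_combination_eq_zero h 1 (i := j + 1) (by omega)
  simp only [coeff_sub, coeff_linear_mul_succ, hasseDeriv_coeff, coeff_C_mul, coeff_C_succ,
    Nat.choose_one_right] at this
  rw [coeff_eq_zero_of_natDegree_lt (by omega : f.natDegree < j + 1 + 2),
    Nat.cast_choose_two, show j + 1 + 1 = j + 2 from rfl] at this
  have hlead : ((j + 2 : ℕ) : K) * f.coeff (j + 2) ≠ 0 :=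
    mul_ne_zero (by norm_cast)
      (coeff_ne_zero_of_eq_degree ((degree_eq_iff_natDegree_eq_of_pos (by omega)).mpr hj))
  apply mul_right_cancel₀ hlead
  rw [hj]; push_cast at this ⊢
  linear_combination -2 * this

end PolynomialRelations

section Cocycle

variable {Δ : AddSubgroup ℂ} {b : ℂ}

lemma ne_zero_of_two_mul_notMem (hb : 2 * b ∉ Δ) : b ≠ 0 := by
  rintro rfl; simp [Δ.zero_mem] at hb

lemma coe_add_ne_zero_of_two_mul_notMem (hb : 2 * b ∉ Δ) (α : Δ) : (α : ℂ) + b ≠ 0 := by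
  intro h
  apply hb
  rw [show 2 * b = -((α : ℂ) + α) by linear_combination 2 * h]
  exact Δ.neg_mem (Δ.add_mem α.2 α.2)

lemma coe_add_two_mul_ne_zero_of_two_mul_notMem (hb : 2 * b ∉ Δ) (α : Δ) :
    (α : ℂ) + 2 * b ≠ 0 := by
  intro h
  apply hb
  rw [show 2 * b = -(α : ℂ) by linear_combination h]
  exact Δ.neg_mem α.2

variable {φ : Δ →+ ℂ}

lemma Bc_zero_right (hb : b ≠ 0) (α : Δ) : Bc b φ α 0 = φ α := by
  simp only [Bc, map_zero, ZeroMemClass.coe_zero]; field_simp; ring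

lemma Bc_zero_left (hb : b ≠ 0) (β : Δ) : Bc b φ 0 β = -φ β := by
  simp only [Bc, map_zero, ZeroMemClass.coe_zero]; field_simp; ring

/-- `Φ([x_α λ x_β])` for the 1-cochain `x_γ ↦ Φ γ` that vanishes on `∂ CL(b,φ)`. -/
noncomputable def coboundary (b : ℂ) (φ : Δ →+ ℂ) (Φ : Δ → ℂ) : Δ → Δ → ℂ[X] :=
  fun α β => C (Φ (α + β)) * (C ((α : ℂ) + β + 2 * b) * X + C (Bc b φ α β))

lemma isCocycle_coboundary (Φ : Δ → ℂ) : IsCocycle Δ b φ (coboundary b φ Φ) := by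
  refine ⟨fun α β l => ?_, fun α β γ l m => ?_⟩
  · simp only [coboundary, eval_mul, eval_add, eval_C, eval_X, add_comm β α, Bc]
    field_simp
    ring
  · simp only [coboundary, eval_mul, eval_add, eval_C, eval_X, Bc, AddSubgroup.coe_add, map_add]
    rw [show β + (α + γ) = α + (β + γ) by abel, show α + β + γ = α + (β + γ) by abel]
    field_simp
    ring

namespace IsCocycle

variable {F G : Δ → Δ → ℂ[X]}

lemma sub (hF : IsCocycle Δ b φ F) (hG : IsCocycle Δ b φ G) : IsCocycle Δ b φ (F - G) := by
  refine ⟨fun α β l => ?_, fun α β γ l m => ?_⟩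
  · simp only [Pi.sub_apply, eval_sub]
    linear_combination hF.1 α β l - hG.1 α β l
  · simp only [Pi.sub_apply, eval_sub]
    linear_combination hF.2 α β γ l m - hG.2 α β γ l m

lemma relation_zero_right (hF : IsCocycle Δ b φ F) (hb : b ≠ 0) (α β : Δ) (m : ℂ) :
    (((β : ℂ) + 2 * b) * (F α β).eval 0) * m + φ β * (F α β).eval 0
        + (((α : ℂ) + b) * m + φ α) * (F α β).eval (-m)
      = (-((α : ℂ) + b) * m + Bc b φ α β) * (F (α + β) 0).eval m := by
  have h := hF.2 α β 0 0 m
  simp only [ZeroMemClass.coe_zero, add_zero, zero_add, Bc_zero_right hb, hF.1 β α m] at h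
  linear_combination h

lemma relation_zero_middle (hF : IsCocycle Δ b φ F) (hb : b ≠ 0) (α γ : Δ) (l m : ℂ) :
    (b * l + ((γ : ℂ) + 2 * b) * m + -φ γ) * (F α γ).eval l
        + (((α : ℂ) + b) * m + ((α : ℂ) + γ + 2 * b) * l + Bc b φ α γ) * (F (α + γ) 0).eval (-m)
      = (b * l - ((α : ℂ) + b) * m + φ α) * (F α γ).eval (l + m) := by
  have h := hF.2 α 0 γ l m
  simp only [ZeroMemClass.coe_zero, add_zero, zero_add, Bc_zero_right hb, Bc_zero_left hb,
    hF.1 0 (α + γ) m] at h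
  linear_combination h

lemma natDegree_eq_natDegree_add_zero (hF : IsCocycle Δ b φ F) (hb : 2 * b ∉ Δ) (α β : Δ) :
    (F α β).natDegree = (F (α + β) 0).natDegree :=
  natDegree_eq_of_forall_eval_neg (coe_add_ne_zero_of_two_mul_notMem hb α)
    (hF.relation_zero_right (ne_zero_of_two_mul_notMem hb) α β)

lemma natDegree_le_one [Nontrivial Δ] (hF : IsCocycle Δ b φ F) (hb : 2 * b ∉ Δ) (α γ : Δ) :
    (F α γ).natDegree ≤ 1 := by
  have hb0 := ne_zero_of_two_mul_notMem hb
  by_contra! hn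
  rcases (show (F α γ).natDegree = 2 ∨ 3 ≤ (F α γ).natDegree by omega) with h2 | h3
  · have hsum := add_eq_mul_natDegree_of_forall_eval_add (hF.relation_zero_middle hb0 α γ) hn
    rw [h2] at hsum
    apply coe_add_ne_zero_of_two_mul_notMem hb (α + γ)
    push_cast
    linear_combination hsum
  · obtain ⟨t, ht⟩ := exists_ne (0 : Δ)
    have hdeg : (F (α + t) (γ - t)).natDegree = (F α γ).natDegree := by
      rw [natDegree_eq_natDegree_add_zero hF hb, natDegree_eq_natDegree_add_zero hF hb α,
        show α + t + (γ - t) = α + γ by abel]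
    have e := two_mul_eq_mul_natDegree_sub_one_of_forall_eval_add
      (hF.relation_zero_middle hb0 α γ) h3
    have e' := two_mul_eq_mul_natDegree_sub_one_of_forall_eval_add
      (hF.relation_zero_middle hb0 (α + t) (γ - t)) (hdeg ▸ h3)
    rw [hdeg] at e'
    push_cast at e'
    exact ht (Subtype.ext (by push_cast; linear_combination (e' - e) / 2))

lemma exists_eq_coboundary_add_C (hF : IsCocycle Δ b φ F) (hb : 2 * b ∉ Δ)
    (hdeg : ∀ α β, (F α β).natDegree ≤ 1) :
    ∃ (Φ : Δ → ℂ) (c : Δ → Δ → ℂ), (∀ α β : Δ, (α : ℂ) + β ≠ -(3 * b) → c α β = 0) ∧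
      ∀ α β, F α β = coboundary b φ Φ α β + C (c α β) := by
  have hb0 := ne_zero_of_two_mul_notMem hb
  have heval : ∀ α β x, (F α β).eval x = (F α β).coeff 1 * x + (F α β).coeff 0 := fun α β x => by
    conv_lhs => rw [eq_X_add_C_of_natDegree_le_one (hdeg α β)]
    simp
  have hlin : ∀ α β : Δ, (F α β).coeff 1 = (F (α + β) 0).coeff 1 ∧
      ((α : ℂ) + β + 3 * b) * (F α β).coeff 0
        = (Bc b φ α β + φ α) * (F (α + β) 0).coeff 1 - ((α : ℂ) + b) * (F (α + β) 0).coeff 0 := by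
    intro α β
    have h₀ := hF.relation_zero_right hb0 α β 0
    have h₁ := hF.relation_zero_right hb0 α β 1
    have h₂ := hF.relation_zero_right hb0 α β (-1)
    simp only [heval] at h₀ h₁ h₂
    have hp : (F α β).coeff 1 = (F (α + β) 0).coeff 1 :=
      mul_left_cancel₀ (coe_add_ne_zero_of_two_mul_notMem hb α)
        (by linear_combination -(h₁ + h₂ - 2 * h₀) / 2)
    exact ⟨hp, by linear_combination (h₁ - h₂) / 2 + φ α * hp⟩
  obtain ⟨Φ, hP⟩ : ∃ Φ : Δ → ℂ, ∀ γ, (F γ 0).coeff 1 = ((γ : ℂ) + 2 * b) * Φ γ :=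
    ⟨fun γ => (F γ 0).coeff 1 / ((γ : ℂ) + 2 * b), fun γ =>
      (mul_div_cancel₀ _ (coe_add_two_mul_ne_zero_of_two_mul_notMem hb γ)).symm⟩
  have hQ : ∀ γ, (F γ 0).coeff 0 = φ γ * Φ γ := fun γ => by
    have h := (hlin γ 0).2
    simp only [add_zero, ZeroMemClass.coe_zero, Bc_zero_right hb0, hP] at h
    apply mul_left_cancel₀ (coe_add_two_mul_ne_zero_of_two_mul_notMem hb γ)
    linear_combination h / 2
  refine ⟨Φ, fun α β => (F α β).coeff 0 - Bc b φ α β * Φ (α + β), fun α β hαβ => ?_,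
    fun α β => Polynomial.funext fun x => ?_⟩
  · have hbB : b * Bc b φ α β = φ α * ((β : ℂ) + b) - φ β * ((α : ℂ) + b) := by
      simp only [Bc]; field_simp; ring
    have h := (hlin α β).2
    rw [hP, hQ, map_add] at h
    push_cast at h
    apply mul_left_cancel₀ (mul_ne_zero hb0 (sub_ne_zero.mpr hαβ) : b * ((α + β : ℂ) - -(3 * b)) ≠ 0)
    linear_combination b * h - b * Φ (α + β) * hbB
  · simp only [coboundary, eval_add, eval_mul, eval_C, eval_X, heval, (hlin α β).1, hP]
    push_cast
    ring

lemma exists_addMonoidHom_of_isCocycle_C {c : Δ → Δ → ℂ} (hc : IsCocycle Δ b φ fun α β => C (c α β))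
    (h3 : 3 * b ∈ Δ) (hb : 2 * b ∉ Δ) (hsupp : ∀ α β : Δ, (α : ℂ) + β ≠ -(3 * b) → c α β = 0) :
    ∃ g : Δ →+ ℂ, g ⟨3 * b, h3⟩ = 0 ∧
      ∀ α β : Δ, c α β = if (α : ℂ) + β = -(3 * b) then g α else 0 := by
  set T : Δ := -⟨3 * b, h3⟩ with hT
  have hTc : (T : ℂ) = -(3 * b) := rfl
  have hadd : ∀ α β, c (α + β) (T - (α + β)) = c α (T - α) + c β (T - β) := by
    intro α β
    -- the `λ`-coefficient of the cocycle identity on `(x_α, x_β, x_{-3b-α-β})`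
    have h₁ := hc.2 α β (T - α - β) 1 0
    have h₀ := hc.2 α β (T - α - β) 0 0
    simp only [eval_C] at h₁ h₀
    rw [show β + (T - α - β) = T - α by abel, show α + (T - α - β) = T - β by abel,
      show T - α - β = T - (α + β) by abel] at h₁ h₀
    push_cast [hTc] at h₁ h₀
    apply mul_left_cancel₀ (coe_add_ne_zero_of_two_mul_notMem hb β)
    linear_combination h₀ - h₁
  let g : Δ →+ ℂ := AddMonoidHom.mk' (fun α => c α (T - α)) hadd
  have hskew : ∀ α β, c α β = -c β α := fun α β => by simpa using hc.1 α β 0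
  refine ⟨g, ?_, fun α β => ?_⟩
  · have h0 : c 0 T = 0 := by simpa [g] using g.map_zero
    rw [show (⟨3 * b, h3⟩ : Δ) = -T by rw [hT, neg_neg], map_neg, neg_eq_zero]
    change c T (T - T) = 0
    rw [sub_self, hskew, h0, neg_zero]
  · split_ifs with h
    · obtain rfl : β = T - α := Subtype.ext (by push_cast [hTc]; linear_combination h)
      rfl
    · exact hsupp α β h

end IsCocycle

end Cocycle

theorem stmt4_general (Δ : AddSubgroup ℂ)
    (b : ℂ) (hb : 2 * b ∉ Δ) (φ : Δ →+ ℂ)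
    (h3 : 3 * b ∈ Δ)
    (F : Δ → Δ → Polynomial ℂ) (hF : IsCocycle Δ b φ F) :
    ∃ g : Δ →+ ℂ, g ⟨3 * b, h3⟩ = 0 ∧
      ∃ Φ : Δ → ℂ, ∀ α β : Δ, ∀ l : ℂ,
        (F α β).eval l
          = (l * ((α : ℂ) + (β : ℂ) + 2 * b) + Bc b φ α β) * Φ (α + β)
            + (if (α : ℂ) + (β : ℂ) = -(3 * b) then g α else 0) := by
  have : Nontrivial Δ := ⟨⟨⟨3 * b, h3⟩, 0, fun h =>
    ne_zero_of_two_mul_notMem hb (by simpa using congrArg Subtype.val h)⟩⟩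
  obtain ⟨Φ, c, hc, hFc⟩ := hF.exists_eq_coboundary_add_C hb (hF.natDegree_le_one hb)
  have hcoc : IsCocycle Δ b φ fun α β => C (c α β) := by
    convert hF.sub (isCocycle_coboundary Φ) using 1
    funext α β
    simp [hFc]
  obtain ⟨g, hg3, hg⟩ := hcoc.exists_addMonoidHom_of_isCocycle_C h3 hb hc
  refine ⟨g, hg3, Φ, fun α β l => ?_⟩
  rw [hFc, ← hg]
  simp only [coboundary, eval_add, eval_mul, eval_C, eval_X]
  ring

/-- If `3b ∈ Δ` and `φ(3b) = 0`, then every 2-cocycle on `CL(b,φ)` is,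
up to a coboundary, of the form `δ_{α+β,−3b} g(α)` for an additive homomorphism
`g : Δ → ℂ` with `g(3b) = 0`. -/
theorem stmt4 (Δ : AddSubgroup ℂ) (hΔinf : (Δ : Set ℂ).Infinite)
    (b : ℂ) (hb : 2 * b ∉ Δ) (φ : Δ →+ ℂ)
    (h3 : 3 * b ∈ Δ) (hφ3 : φ ⟨3 * b, h3⟩ = 0)
    (F : Δ → Δ → Polynomial ℂ) (hF : IsCocycle Δ b φ F) :
    ∃ g : Δ →+ ℂ, g ⟨3 * b, h3⟩ = 0 ∧
      ∃ Φ : Δ → ℂ, ∀ α β : Δ, ∀ l : ℂ,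
        (F α β).eval l
          = (l * ((α : ℂ) + (β : ℂ) + 2 * b) + Bc b φ α β) * Φ (α + β)
            + (if (α : ℂ) + (β : ℂ) = -(3 * b) then g α else 0) :=
  stmt4_general Δ b hb φ h3 F hF
end

section
/- Assume 3b ∈ Δ and φ(3b) = 0, and let g : Δ → ℂ be an additive group homomorphism with g(3b) = 0. Then the ℂ-bilinear bracket on the vector space with basis {x_{α,i} : α ∈ Δ, i ∈ ℤ} ∪ {c₋₁} defined by [x_{α,i}, x_{β,j}] = (i(β+b) − j(α+b)) x_{α+β,i+j−1} + B(α,β) x_{α+β,i+j} + δ_{α+β,−3b} δ_{i+j,−1} g(α) c₋₁, with c₋₁ central, is skew-symmetric and satisfies the Jacobi identity; i.e. it defines a Lie algebra structure, a one-dimensional central extension of Coeff(CL(b,φ)). -/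
namespace Finsupp

variable {X R M : Type*} [CommSemiring R] [AddCommGroup M] [Module R M]

theorem bilinear_antisymm_of_single (br : (X →₀ R) →ₗ[R] (X →₀ R) →ₗ[R] M)
    (h : ∀ p q : X, br (single p 1) (single q 1) = -br (single q 1) (single p 1))
    (x y : X →₀ R) : br x y = -br y x := by
  have : br = -br.flip := by ext p q; simpa using h p q
  simpa using congr($this x y)

theorem bilinear_jacobi_of_single (br : (X →₀ R) →ₗ[R] (X →₀ R) →ₗ[R] (X →₀ R))
    (h : ∀ p q r : X, br (single p 1) (br (single q 1) (single r 1)) =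
      br (br (single p 1) (single q 1)) (single r 1) +
        br (single q 1) (br (single p 1) (single r 1)))
    (x y z : X →₀ R) : br x (br y z) = br (br x y) z + br y (br x z) := by
  have hpq : ∀ p q : X, br (single p 1) ∘ₗ br (single q 1) =
      br (br (single p 1) (single q 1)) + br (single q 1) ∘ₗ br (single p 1) := by
    intro p q; ext r : 2; simpa using h p q r
  have : br.compl₂ (br.flip z) = br.compr₂ (br.flip z) + (br.compl₂ (br.flip z)).flip := by
    ext p q : 4; simpa using congr($(hpq p q) z)
  simpa using congr($this x y)

end Finsupp

variable {Δ : AddSubgroup ℂ}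

def shiftCoeff (b : ℂ) (α : Δ) (i : ℤ) (β : Δ) (j : ℤ) : ℂ :=
  i * ((β : ℂ) + b) - j * ((α : ℂ) + b)

noncomputable def centralDelta (b : ℂ) (σ : Δ) (m : ℤ) : ℂ :=
  if (σ : ℂ) = -(3 * b) ∧ m = -1 then 1 else 0

theorem AddMonoidHom.map_eq_zero_of_coe_eq_neg_three_mul {b : ℂ} (f : Δ →+ ℂ)
    (h3 : 3 * b ∈ Δ) (hf : f ⟨3 * b, h3⟩ = 0) (σ : Δ) (hσ : (σ : ℂ) = -(3 * b)) :
    f σ = 0 := by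
  obtain rfl : σ = -⟨3 * b, h3⟩ := Subtype.ext (by simpa using hσ)
  rw [map_neg, hf, neg_zero]

section Coefficients

variable (b : ℂ) (φ g : Δ →+ ℂ) (α β γ : Δ) (i j k : ℤ)

theorem shiftCoeff_swap : shiftCoeff b β j α i = -shiftCoeff b α i β j := by
  unfold shiftCoeff; ring

theorem Bc_swap : Bc b φ β α = -Bc b φ α β := by
  unfold Bc; ring

theorem centralDelta_mul_swap (hg : ∀ σ : Δ, (σ : ℂ) = -(3 * b) → g σ = 0) (m : ℤ) :
    centralDelta b (α + β) m * g β = -(centralDelta b (α + β) m * g α) := by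
  unfold centralDelta
  split_ifs with h
  · linear_combination (map_add g α β).symm.trans (hg _ h.1)
  · ring

theorem shiftCoeff_jacobi :
    shiftCoeff b β j γ k * shiftCoeff b α i (β + γ) (j + k - 1) =
      shiftCoeff b α i β j * shiftCoeff b (α + β) (i + j - 1) γ k +
        shiftCoeff b α i γ k * shiftCoeff b β j (α + γ) (i + k - 1) := by
  simp only [shiftCoeff, AddSubgroup.coe_add]; push_cast; ring

theorem shiftCoeff_Bc_jacobi :
    shiftCoeff b β j γ k * Bc b φ α (β + γ) +
        Bc b φ β γ * shiftCoeff b α i (β + γ) (j + k) =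
      shiftCoeff b α i β j * Bc b φ (α + β) γ +
          Bc b φ α β * shiftCoeff b (α + β) (i + j) γ k +
        (shiftCoeff b α i γ k * Bc b φ β (α + γ) +
          Bc b φ α γ * shiftCoeff b β j (α + γ) (i + k)) := by
  simp only [shiftCoeff, Bc, map_add, AddSubgroup.coe_add]; push_cast; ring

theorem Bc_jacobi :
    Bc b φ β γ * Bc b φ α (β + γ) =
      Bc b φ α β * Bc b φ (α + β) γ + Bc b φ α γ * Bc b φ β (α + γ) := by
  simp only [Bc, map_add, AddSubgroup.coe_add]; ring

theorem shiftCoeff_cocycle (hσ : (α : ℂ) + β + γ = -(3 * b)) (hN : i + j + k = 0) :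
    shiftCoeff b β j γ k * g α =
      shiftCoeff b α i β j * g (α + β) + shiftCoeff b α i γ k * g β := by
  have hγ : (γ : ℂ) = -(3 * b) - α - β := by linear_combination hσ
  have hk : (k : ℂ) = -i - j := by rw [show k = -i - j by omega]; push_cast; ring
  rw [shiftCoeff, shiftCoeff, shiftCoeff, map_add, hγ, hk]
  ring

theorem Bc_cocycle (hσ : (α : ℂ) + β + γ = -(3 * b)) (hφ : φ (α + β + γ) = 0) :
    Bc b φ β γ * g α = Bc b φ α β * g (α + β) + Bc b φ α γ * g β := by
  have hγ : (γ : ℂ) = -(3 * b) - α - β := by linear_combination hσ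
  have hφγ : φ γ = -φ α - φ β := by
    rw [map_add, map_add] at hφ; linear_combination hφ
  rw [Bc, Bc, Bc, map_add, hγ, hφγ]
  ring

theorem centralDelta_jacobi (hφ : ∀ σ : Δ, (σ : ℂ) = -(3 * b) → φ σ = 0) :
    shiftCoeff b β j γ k * (centralDelta b (α + β + γ) (i + j + k - 1) * g α) +
        Bc b φ β γ * (centralDelta b (α + β + γ) (i + j + k) * g α) =
      shiftCoeff b α i β j *
            (centralDelta b (α + β + γ) (i + j + k - 1) * g (α + β)) +
          Bc b φ α β * (centralDelta b (α + β + γ) (i + j + k) * g (α + β)) +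
        (shiftCoeff b α i γ k * (centralDelta b (α + β + γ) (i + j + k - 1) * g β) +
          Bc b φ α γ * (centralDelta b (α + β + γ) (i + j + k) * g β)) := by
  unfold centralDelta
  split_ifs with hN₁ hN hN
  · omega
  · linear_combination shiftCoeff_cocycle b g α β γ i j k (by simpa using hN₁.1) (by omega)
  · linear_combination Bc_cocycle b φ g α β γ (by simpa using hN.1) (hφ _ hN.1)
  · ring

end Coefficients

section Bracket

variable (b : ℂ) (φ g : Δ →+ ℂ)
  (br : (((Δ × ℤ) ⊕ Unit) →₀ ℂ) →ₗ[ℂ] (((Δ × ℤ) ⊕ Unit) →₀ ℂ) →ₗ[ℂ]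
    (((Δ × ℤ) ⊕ Unit) →₀ ℂ))

def IsBasisBracket : Prop :=
  ∀ (α β : Δ) (i j : ℤ),
    br (Finsupp.single (Sum.inl (α, i)) 1) (Finsupp.single (Sum.inl (β, j)) 1)
      = ((i : ℂ) * ((β : ℂ) + b) - (j : ℂ) * ((α : ℂ) + b)) •
          Finsupp.single (Sum.inl (α + β, i + j - 1)) (1 : ℂ)
        + Bc b φ α β • Finsupp.single (Sum.inl (α + β, i + j)) (1 : ℂ)
        + (if (α : ℂ) + (β : ℂ) = -(3 * b) ∧ i + j = -1 then g α else 0) •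
          Finsupp.single (Sum.inr ()) (1 : ℂ)

variable {b φ g br}

theorem IsBasisBracket.apply_single_inl (hbr : IsBasisBracket b φ g br)
    {α β σ : Δ} {i j m : ℤ} (hσ : α + β = σ) (hm : i + j = m) :
    br (Finsupp.single (Sum.inl (α, i)) 1) (Finsupp.single (Sum.inl (β, j)) 1)
      = shiftCoeff b α i β j • Finsupp.single (Sum.inl (σ, m - 1)) 1
        + Bc b φ α β • Finsupp.single (Sum.inl (σ, m)) 1
        + (centralDelta b σ m * g α) • Finsupp.single (Sum.inr ()) 1 := by
  subst hσ hm
  simpa [shiftCoeff, centralDelta, ite_mul] using hbr α β i j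

theorem IsBasisBracket.antisymm_single (hbr : IsBasisBracket b φ g br)
    (hcentral : ∀ v : ((Δ × ℤ) ⊕ Unit) →₀ ℂ,
      br (Finsupp.single (Sum.inr ()) 1) v = 0 ∧ br v (Finsupp.single (Sum.inr ()) 1) = 0)
    (hg : ∀ σ : Δ, (σ : ℂ) = -(3 * b) → g σ = 0) (p q : (Δ × ℤ) ⊕ Unit) :
    br (Finsupp.single p 1) (Finsupp.single q 1) =
      -br (Finsupp.single q 1) (Finsupp.single p 1) := by
  rcases p with ⟨α, i⟩ | ⟨⟩
  · rcases q with ⟨β, j⟩ | ⟨⟩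
    · rw [hbr.apply_single_inl rfl rfl, hbr.apply_single_inl (add_comm β α) (add_comm j i)]
      match_scalars
      · rw [shiftCoeff_swap]; ring
      · rw [Bc_swap]; ring
      · rw [centralDelta_mul_swap b g α β hg]; ring
    · simp [hcentral]
  · simp [hcentral]

theorem IsBasisBracket.jacobi_single (hbr : IsBasisBracket b φ g br)
    (hcentral : ∀ v : ((Δ × ℤ) ⊕ Unit) →₀ ℂ,
      br (Finsupp.single (Sum.inr ()) 1) v = 0 ∧ br v (Finsupp.single (Sum.inr ()) 1) = 0)
    (hφ : ∀ σ : Δ, (σ : ℂ) = -(3 * b) → φ σ = 0) (p q r : (Δ × ℤ) ⊕ Unit) :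
    br (Finsupp.single p 1) (br (Finsupp.single q 1) (Finsupp.single r 1)) =
      br (br (Finsupp.single p 1) (Finsupp.single q 1)) (Finsupp.single r 1) +
        br (Finsupp.single q 1) (br (Finsupp.single p 1) (Finsupp.single r 1)) := by
  rcases p with ⟨α, i⟩ | ⟨⟩ <;> [skip; simp [hcentral]]
  rcases q with ⟨β, j⟩ | ⟨⟩ <;> [skip; simp [hcentral]]
  rcases r with ⟨γ, k⟩ | ⟨⟩ <;> [skip; simp [hcentral]]
  have e := @IsBasisBracket.apply_single_inl _ b φ g br hbr
  rw [e rfl rfl, e rfl rfl, e rfl rfl]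
  simp only [map_add, map_smul, LinearMap.add_apply, LinearMap.smul_apply, (hcentral _).1,
    (hcentral _).2, smul_zero, add_zero]
  rw [e (add_assoc α β γ).symm (show i + (j + k - 1) = i + j + k - 1 by ring),
    e (add_assoc α β γ).symm (show i + (j + k) = i + j + k by ring),
    e rfl (show i + j - 1 + k = i + j + k - 1 by ring),
    e rfl rfl,
    e (show β + (α + γ) = α + β + γ by abel) (show j + (i + k - 1) = i + j + k - 1 by ring),
    e (show β + (α + γ) = α + β + γ by abel) (show j + (i + k) = i + j + k by ring)]
  match_scalars <;> simp only [mul_one]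
  · exact shiftCoeff_jacobi b α β γ i j k
  · exact shiftCoeff_Bc_jacobi b φ α β γ i j k
  · exact centralDelta_jacobi b φ g α β γ i j k hφ
  · exact Bc_jacobi b φ α β γ

end Bracket

theorem stmt6_general (Δ : AddSubgroup ℂ)
    (b : ℂ) (φ : Δ →+ ℂ)
    (h3 : 3 * b ∈ Δ) (hφ3 : φ ⟨3 * b, h3⟩ = 0)
    (g : Δ →+ ℂ) (hg : g ⟨3 * b, h3⟩ = 0)
    (br : (((Δ × ℤ) ⊕ Unit) →₀ ℂ) →ₗ[ℂ] (((Δ × ℤ) ⊕ Unit) →₀ ℂ) →ₗ[ℂ]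
      (((Δ × ℤ) ⊕ Unit) →₀ ℂ))
    (hbr : ∀ (α β : Δ) (i j : ℤ),
      br (Finsupp.single (Sum.inl (α, i)) 1) (Finsupp.single (Sum.inl (β, j)) 1)
        = ((i : ℂ) * ((β : ℂ) + b) - (j : ℂ) * ((α : ℂ) + b)) •
            Finsupp.single (Sum.inl (α + β, i + j - 1)) (1 : ℂ)
          + Bc b φ α β • Finsupp.single (Sum.inl (α + β, i + j)) (1 : ℂ)
          + (if (α : ℂ) + (β : ℂ) = -(3 * b) ∧ i + j = -1 then g α else 0) •
            Finsupp.single (Sum.inr ()) (1 : ℂ))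
    (hcentral : ∀ v : ((Δ × ℤ) ⊕ Unit) →₀ ℂ,
      br (Finsupp.single (Sum.inr ()) 1) v = 0 ∧
      br v (Finsupp.single (Sum.inr ()) 1) = 0) :
    (∀ x y, br x y = - br y x) ∧
    (∀ x y z, br x (br y z) = br (br x y) z + br y (br x z)) := by
  have hφ := φ.map_eq_zero_of_coe_eq_neg_three_mul h3 hφ3
  have hg' := g.map_eq_zero_of_coe_eq_neg_three_mul h3 hg
  exact ⟨Finsupp.bilinear_antisymm_of_single br
      (IsBasisBracket.antisymm_single hbr hcentral hg'),
    Finsupp.bilinear_jacobi_of_single br (IsBasisBracket.jacobi_single hbr hcentral hφ)⟩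

/-- Assume `3b ∈ Δ`, `φ(3b) = 0`, and let `g : Δ → ℂ` be an additive
homomorphism with `g(3b) = 0`.  On the free ℂ-vector space with basis
`{x_{α,i} : α ∈ Δ, i ∈ ℤ} ∪ {c₋₁}` (modelled as `((Δ × ℤ) ⊕ Unit) →₀ ℂ`, with
`x_{α,i} = single (inl (α,i)) 1` and `c₋₁ = single (inr ()) 1`), the bilinear bracket
determined by `[x_{α,i}, x_{β,j}] = (i(β+b) − j(α+b)) x_{α+β,i+j−1} + B(α,β) x_{α+β,i+j}
+ δ_{α+β,−3b} δ_{i+j,−1} g(α) c₋₁` with `c₋₁` central is skew-symmetric and satisfies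
the Jacobi identity: it is a one-dimensional central extension of `Coeff(CL(b,φ))`. -/
theorem stmt6 (Δ : AddSubgroup ℂ) (hΔinf : (Δ : Set ℂ).Infinite)
    (b : ℂ) (hb : 2 * b ∉ Δ) (φ : Δ →+ ℂ)
    (h3 : 3 * b ∈ Δ) (hφ3 : φ ⟨3 * b, h3⟩ = 0)
    (g : Δ →+ ℂ) (hg : g ⟨3 * b, h3⟩ = 0)
    (br : (((Δ × ℤ) ⊕ Unit) →₀ ℂ) →ₗ[ℂ] (((Δ × ℤ) ⊕ Unit) →₀ ℂ) →ₗ[ℂ]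
      (((Δ × ℤ) ⊕ Unit) →₀ ℂ))
    (hbr : ∀ (α β : Δ) (i j : ℤ),
      br (Finsupp.single (Sum.inl (α, i)) 1) (Finsupp.single (Sum.inl (β, j)) 1)
        = ((i : ℂ) * ((β : ℂ) + b) - (j : ℂ) * ((α : ℂ) + b)) •
            Finsupp.single (Sum.inl (α + β, i + j - 1)) (1 : ℂ)
          + Bc b φ α β • Finsupp.single (Sum.inl (α + β, i + j)) (1 : ℂ)
          + (if (α : ℂ) + (β : ℂ) = -(3 * b) ∧ i + j = -1 then g α else 0) •
            Finsupp.single (Sum.inr ()) (1 : ℂ))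
    (hcentral : ∀ v : ((Δ × ℤ) ⊕ Unit) →₀ ℂ,
      br (Finsupp.single (Sum.inr ()) 1) v = 0 ∧
      br v (Finsupp.single (Sum.inr ()) 1) = 0) :
    (∀ x y, br x y = - br y x) ∧
    (∀ x y z, br x (br y z) = br (br x y) z + br y (br x z)) :=
  stmt6_general Δ b φ h3 hφ3 g hg br hbr hcentral
end

section
/- Suppose f_{α,γ}(λ,∂) ∈ ℂ[λ,∂] (α, γ ∈ Δ) satisfies the intermediate-series equation and every f_{α,γ} is nonzero. Then for all β, γ ∈ Δ, the total degree of f_{β,γ}(λ,∂) as a polynomial in λ and ∂ is at most 2 (i.e. strictly smaller than 3). -/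
/-- Evaluation of a two-variable polynomial `P(λ,∂) ∈ ℂ[λ,∂]` at `λ = l`, `∂ = d`. -/
noncomputable def ev2 (P : MvPolynomial (Fin 2) ℂ) (l d : ℂ) : ℂ :=
  MvPolynomial.eval ![l, d] P

/-- The intermediate-series equation for a family `f_{α,γ}(λ,∂) ∈ ℂ[λ,∂]`:
`((β+b)λ − (α+b)μ + B(α,β)) f_{α+β,γ}(λ+μ,∂)
  = f_{β,γ}(μ,λ+∂) f_{α,β+γ}(λ,∂) − f_{α,γ}(λ,μ+∂) f_{β,α+γ}(μ,∂)`
for all `α, β, γ ∈ Δ` (an identity in `ℂ[λ,μ,∂]`, stated via evaluation at all complex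
points `l, m, d`).  Equivalently, `V = ⊕_{γ∈Δ} ℂ[∂]M_γ` with
`x_α λ M_γ = f_{α,γ}(λ,∂) M_{α+γ}` is a free intermediate series module over
`CL(b,φ)`. -/
def ISE (Δ : AddSubgroup ℂ) (b : ℂ) (φ : Δ →+ ℂ)
    (f : Δ → Δ → MvPolynomial (Fin 2) ℂ) : Prop :=
  ∀ α β γ : Δ, ∀ l m d : ℂ,
    (((β : ℂ) + b) * l - ((α : ℂ) + b) * m + Bc b φ α β)
        * ev2 (f (α + β) γ) (l + m) d
      = ev2 (f β γ) m (l + d) * ev2 (f α (β + γ)) l d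
        - ev2 (f α γ) l (m + d) * ev2 (f β (α + γ)) m d

/-!
Setting `β = 0` and differentiating the intermediate-series equation in `μ` at `μ = 0` gives, for
`f = f_{α,γ}`, the first-order equation
`(bλ + φ(α)) ∂_λ f + (b∂ + c) ∂_∂ f = K · f`,  `K = α + b + q_γ(λ + ∂) - q_{α+γ}(∂)`,
where `q_γ(x) = (∂_λ f_{0,γ})(0, x)`; the coefficient `b∂ + c` comes from `α = β = μ = 0`, which
forces `f_{0,γ}(0, ∂) = b∂ + f_{0,γ}(0, 0)`. The left side has total degree at most `deg f`, so `K`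
is a constant, and comparing coefficients of a monomial of top degree gives `K = b · deg f`.
Adding this for `(β, γ)` and `(-β, β + γ)`, the `q`-terms cancel, so
`deg f_{β,γ} + deg f_{-β,β+γ} = 2`.
-/

namespace MvPolynomial

variable {R σ : Type*}

section CommSemiring

variable [CommSemiring R]

theorem coeff_X_mul_pderiv (i : σ) (u : σ →₀ ℕ) (P : MvPolynomial σ R) :
    coeff u (X i * pderiv i P) = u i * coeff u P := by
  classical
  induction P using MvPolynomial.induction_on' with
  | monomial m r =>
    rw [X_mul_pderiv_monomial, coeff_smul, coeff_monomial]
    split_ifs with h <;> simp [h, nsmul_eq_mul]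
  | add p q hp hq => simp only [map_add, mul_add, coeff_add, hp, hq]

theorem totalDegree_X_mul_pderiv_le (i : σ) (P : MvPolynomial σ R) :
    (X i * pderiv i P).totalDegree ≤ P.totalDegree :=
  totalDegree_le_of_support_subset fun u hu => by
    rw [mem_support_iff, coeff_X_mul_pderiv] at hu
    exact mem_support_iff.mpr (right_ne_zero_of_mul hu)

theorem totalDegree_pderiv_le (i : σ) (P : MvPolynomial σ R) :
    (pderiv i P).totalDegree ≤ P.totalDegree := by
  refine Finset.sup_le fun u hu => ?_
  rw [mem_support_iff, coeff_pderiv] at hu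
  have h := le_totalDegree (mem_support_iff.mpr (left_ne_zero_of_mul hu))
  change Finsupp.degree _ ≤ _ at h
  change Finsupp.degree u ≤ _
  rw [map_add, Finsupp.degree_single] at h
  omega

variable [Fintype σ]

theorem totalDegree_sum_mul_pderiv_le (a : R) (c : σ → R) (P : MvPolynomial σ R) :
    (∑ i, (C a * X i + C (c i)) * pderiv i P).totalDegree ≤ P.totalDegree := by
  refine totalDegree_finsetSum_le fun i _ => ?_
  rw [add_mul, mul_assoc]
  refine (totalDegree_add _ _).trans (max_le ?_ ?_) <;> refine (totalDegree_mul _ _).trans ?_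
  · simpa using totalDegree_X_mul_pderiv_le i P
  · simpa using totalDegree_pderiv_le i P

theorem coeff_sum_mul_pderiv_of_degree_eq (a : R) (c : σ → R) (P : MvPolynomial σ R)
    {u : σ →₀ ℕ} (hu : u.degree = P.totalDegree) :
    coeff u (∑ i, (C a * X i + C (c i)) * pderiv i P) = a * P.totalDegree * coeff u P := by
  have hzero : ∀ i, coeff (u + Finsupp.single i 1) P = 0 := fun i =>
    coeff_eq_zero_of_totalDegree_lt (by
      change _ < Finsupp.degree _
      rw [map_add, Finsupp.degree_single, hu]
      omega)
  simp only [coeff_sum, add_mul, mul_assoc, coeff_add, coeff_C_mul, coeff_X_mul_pderiv,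
    coeff_pderiv, hzero, zero_mul, mul_zero, add_zero]
  rw [← Finset.mul_sum, ← Finset.sum_mul, ← Nat.cast_sum, ← Finsupp.degree_eq_sum, hu]

end CommSemiring

theorem eq_C_of_mul_eq_sum_mul_pderiv [CommRing R] [IsDomain R] [Fintype σ]
    {K P : MvPolynomial σ R} {a : R} {c : σ → R} (hP : P ≠ 0)
    (h : K * P = ∑ i, (C a * X i + C (c i)) * pderiv i P) :
    K = C (a * P.totalDegree) := by
  have hK : K.totalDegree = 0 := by
    by_cases hK0 : K = 0
    · simp [hK0]
    have := totalDegree_sum_mul_pderiv_le a c P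
    rw [← h, totalDegree_mul_of_isDomain hK0 hP] at this
    omega
  rw [totalDegree_eq_zero_iff_eq_C] at hK
  obtain ⟨u, hu, hmax⟩ := Finset.exists_max_image P.support Finsupp.degree
    (support_nonempty.mpr hP)
  have hdeg : u.degree = P.totalDegree :=
    le_antisymm (le_totalDegree hu) (Finset.sup_le hmax)
  have hcoeff := congrArg (coeff u) h
  rw [coeff_sum_mul_pderiv_of_degree_eq a c P hdeg, hK, coeff_C_mul] at hcoeff
  rw [hK, mul_right_cancel₀ (mem_support_iff.mp hu) hcoeff]

theorem hasDerivAt_eval_add_single {𝕜 : Type*} [NontriviallyNormedField 𝕜] [DecidableEq σ]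
    (P : MvPolynomial σ 𝕜) (x : σ → 𝕜) (i : σ) :
    HasDerivAt (fun t => eval (x + Pi.single i t) P) (eval x (pderiv i P)) 0 := by
  induction P using MvPolynomial.induction_on with
  | C a => simpa using hasDerivAt_const (0 : 𝕜) a
  | add p q hp hq => simp only [map_add]; exact hp.add hq
  | mul_X p j hp =>
    have hXj : HasDerivAt (fun t => x j + (Pi.single i t : σ → 𝕜) j)
        ((Pi.single i 1 : σ → 𝕜) j) 0 := by
      by_cases h : j = i
      · subst h; simpa using (hasDerivAt_id (0 : 𝕜)).const_add (x j)
      · simpa [h] using hasDerivAt_const (0 : 𝕜) (x j)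
    simp only [map_mul, eval_X, Pi.add_apply]
    refine (hp.mul hXj).congr_deriv ?_
    rcases eq_or_ne j i with rfl | h <;> simp [*] <;> ring

end MvPolynomial

open MvPolynomial

theorem eq_of_ev2_eq {P Q : MvPolynomial (Fin 2) ℂ} (h : ∀ l d, ev2 P l d = ev2 Q l d) :
    P = Q :=
  MvPolynomial.funext fun y => by rw [← FinVec.etaExpand_eq y]; exact h (y 0) (y 1)

section ev2

variable (P Q : MvPolynomial (Fin 2) ℂ) (l d : ℂ)

@[simp] theorem ev2_add : ev2 (P + Q) l d = ev2 P l d + ev2 Q l d := map_add _ _ _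
@[simp] theorem ev2_sub : ev2 (P - Q) l d = ev2 P l d - ev2 Q l d := map_sub _ _ _
@[simp] theorem ev2_mul : ev2 (P * Q) l d = ev2 P l d * ev2 Q l d := map_mul _ _ _
@[simp] theorem ev2_zero : ev2 0 l d = 0 := map_zero _
@[simp] theorem ev2_C (a : ℂ) : ev2 (C a) l d = a := eval_C _
@[simp] theorem ev2_X_zero : ev2 (X 0) l d = l := eval_X _
@[simp] theorem ev2_X_one : ev2 (X 1) l d = d := eval_X _

end ev2

@[simp] theorem ev2_bind₁ (P p q : MvPolynomial (Fin 2) ℂ) (l d : ℂ) :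
    ev2 (bind₁ ![p, q] P) l d = ev2 P (ev2 p l d) (ev2 q l d) := by
  rw [ev2, eval, eval₂Hom_bind₁]
  congr 2
  ext i; fin_cases i <;> rfl

theorem hasDerivAt_ev2_fst (P : MvPolynomial (Fin 2) ℂ) (l d : ℂ) :
    HasDerivAt (fun t => ev2 P (l + t) d) (ev2 (pderiv 0 P) l d) 0 := by
  have h : ∀ t, ![l + t, d] = ![l, d] + Pi.single 0 t := fun t => by
    ext j; fin_cases j <;> simp
  simpa only [ev2, h] using hasDerivAt_eval_add_single P ![l, d] 0

theorem hasDerivAt_ev2_snd (P : MvPolynomial (Fin 2) ℂ) (l d : ℂ) :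
    HasDerivAt (fun t => ev2 P l (t + d)) (ev2 (pderiv 1 P) l d) 0 := by
  have h : ∀ t, ![l, t + d] = ![l, d] + Pi.single 1 t := fun t => by
    ext j; fin_cases j <;> simp [add_comm]
  simpa only [ev2, h] using hasDerivAt_eval_add_single P ![l, d] 1

namespace ISE

variable {Δ : AddSubgroup ℂ} {b : ℂ} {φ : Δ →+ ℂ} {f : Δ → Δ → MvPolynomial (Fin 2) ℂ}

theorem ev2_zero_fst (hf : ISE Δ b φ f) {γ : Δ} (hγ : f 0 γ ≠ 0) (x : ℂ) :
    ev2 (f 0 γ) 0 x = b * x + ev2 (f 0 γ) 0 0 := by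
  set W : MvPolynomial (Fin 2) ℂ :=
    C b * X 0 - bind₁ ![0, X 0 + X 1] (f 0 γ) + bind₁ ![0, X 1] (f 0 γ)
  have hW : ∀ l d, ev2 W l d = b * l - ev2 (f 0 γ) 0 (l + d) + ev2 (f 0 γ) 0 d := by
    intro l d
    simp [W]
  have hmul : f 0 γ * W = 0 := eq_of_ev2_eq fun l d => by
    have h := hf 0 0 γ l 0 d
    simp only [ZeroMemClass.coe_zero, zero_add, mul_zero, sub_zero, Bc, map_zero, sub_self,
      add_zero] at h
    rw [ev2_mul, hW, ev2_zero]
    linear_combination h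
  have h := hW x 0
  rw [(mul_eq_zero.mp hmul).resolve_left hγ, ev2_zero, add_zero] at h
  linear_combination h

theorem linearization (hf : ISE Δ b φ f) (hb : b ≠ 0) (α γ : Δ) (l d : ℂ) :
    (b * l + φ α) * ev2 (pderiv 0 (f α γ)) l d - ((α : ℂ) + b) * ev2 (f α γ) l d
      = ev2 (pderiv 0 (f 0 γ)) 0 (l + d) * ev2 (f α γ) l d
        - (ev2 (pderiv 1 (f α γ)) l d * ev2 (f 0 (α + γ)) 0 d
          + ev2 (f α γ) l d * ev2 (pderiv 0 (f 0 (α + γ))) 0 d) := by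
  have hB : Bc b φ α 0 = φ α := by
    simp only [Bc, ZeroMemClass.coe_zero, mul_zero, map_zero, zero_mul, sub_self, sub_zero,
      zero_add]
    field_simp
  have hlin : HasDerivAt (fun m : ℂ => b * l - ((α : ℂ) + b) * m + φ α) (-((α : ℂ) + b)) 0 := by
    simpa using
      (((hasDerivAt_id (0 : ℂ)).const_mul ((α : ℂ) + b)).const_sub (b * l)).add_const (φ α)
  have hL := hlin.mul (hasDerivAt_ev2_fst (f α γ) l d)
  have hG := hasDerivAt_ev2_fst (f 0 γ) 0 (l + d)
  have hJ := hasDerivAt_ev2_fst (f 0 (α + γ)) 0 d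
  simp only [zero_add] at hG hJ
  have hR := (hG.mul_const (ev2 (f α γ) l d)).sub ((hasDerivAt_ev2_snd (f α γ) l d).mul hJ)
  have hL' := hL.congr_of_eventuallyEq (Filter.Eventually.of_forall fun m => by
    have h := hf α 0 γ l m d
    simp only [ZeroMemClass.coe_zero, zero_add, hB, add_zero] at h
    exact h.symm)
  have := hL'.unique hR
  simp only [add_zero, mul_zero, sub_zero, zero_add] at this
  linear_combination this

theorem mul_eq_sum_mul_pderiv (hf : ISE Δ b φ f) (hb : b ≠ 0) {α γ : Δ}
    (hαγ : f 0 (α + γ) ≠ 0) :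
    (C ((α : ℂ) + b) + bind₁ ![0, X 0 + X 1] (pderiv 0 (f 0 γ))
        - bind₁ ![0, X 1] (pderiv 0 (f 0 (α + γ)))) * f α γ
      = ∑ i, (C b * X i + C (![φ α, ev2 (f 0 (α + γ)) 0 0] i)) * pderiv i (f α γ) :=
  eq_of_ev2_eq fun l d => by
    have h := hf.linearization hb α γ l d
    rw [hf.ev2_zero_fst hαγ d] at h
    simp only [Fin.sum_univ_two, ev2_mul, ev2_sub, ev2_add, ev2_C, ev2_bind₁, ev2_zero, ev2_X_zero,
      ev2_X_one, Matrix.cons_val_zero, Matrix.cons_val_one]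
    linear_combination -h

theorem mul_totalDegree_eq (hf : ISE Δ b φ f) (hb : b ≠ 0) (hnz : ∀ α γ, f α γ ≠ 0) (α γ : Δ) :
    b * (f α γ).totalDegree
      = α + b + ev2 (pderiv 0 (f 0 γ)) 0 0 - ev2 (pderiv 0 (f 0 (α + γ))) 0 0 := by
  have h := congrArg (ev2 · 0 0)
    (eq_C_of_mul_eq_sum_mul_pderiv (hnz α γ) (hf.mul_eq_sum_mul_pderiv hb (hnz 0 (α + γ))))
  simp only [ev2_C, ev2_add, ev2_sub, ev2_bind₁, ev2_X_zero, ev2_X_one, ev2_zero, add_zero] at h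
  exact h.symm

end ISE

theorem stmt14_general (Δ : AddSubgroup ℂ)
    (b : ℂ) (hb : 2 * b ∉ Δ) (φ : Δ →+ ℂ)
    (f : Δ → Δ → MvPolynomial (Fin 2) ℂ) (hf : ISE Δ b φ f)
    (hnz : ∀ α γ : Δ, f α γ ≠ 0) :
    ∀ β γ : Δ, (f β γ).totalDegree ≤ 2 := by
  intro β γ
  have hb0 : b ≠ 0 := by
    rintro rfl
    exact hb (by simp)
  have h₁ := hf.mul_totalDegree_eq hb0 hnz β γ
  have h₂ := hf.mul_totalDegree_eq hb0 hnz (-β) (β + γ)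
  rw [neg_add_cancel_left, AddSubgroup.coe_neg] at h₂
  have hsum : ((f β γ).totalDegree + (f (-β) (β + γ)).totalDegree : ℂ) = 2 :=
    mul_left_cancel₀ hb0 (by linear_combination h₁ + h₂)
  have : (f β γ).totalDegree + (f (-β) (β + γ)).totalDegree = 2 := by exact_mod_cast hsum
  omega

/-- If a family satisfying the intermediate-series equation has all
members nonzero, then every `f_{β,γ}(λ,∂)` has total degree (in `λ` and `∂` together)
at most 2, i.e. strictly smaller than 3. -/
theorem stmt14 (Δ : AddSubgroup ℂ) (hΔinf : (Δ : Set ℂ).Infinite)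
    (b : ℂ) (hb : 2 * b ∉ Δ) (φ : Δ →+ ℂ)
    (f : Δ → Δ → MvPolynomial (Fin 2) ℂ) (hf : ISE Δ b φ f)
    (hnz : ∀ α γ : Δ, f α γ ≠ 0) :
    ∀ β γ : Δ, (f β γ).totalDegree ≤ 2 :=
  stmt14_general Δ b hb φ f hf hnz
end
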